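/- arXiv:1507.03284 — 2 statements merged into one kernel-verified Lean document; each statement's English description precedes it below -/
import Mathlib

section
/- Let p/q be an even rational parameter with p ≥ 2, even predecessor p'/q', and core predecessor p̂/q̂. Then p'/q' is also the even predecessor of p̂/q̂. -/
/-!
Write `ω = p + q`, `s = p' + q'` and `ε = p q' - q p' = ±1`. Both `ω` and `s` are odd, and
since `p s - ω p' = ε`, the integer `τ₀ = (ω - s) / 2` satisfies `2 p τ₀ = p (ω - s) ≡ -ε (mod ω)`;
by uniqueness of the tune, `τ = τ₀`. The lower bound defining `κ` then reads `κ s ≤ τ`, i.e. `(2κ + 1) s ≤ ω`, and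
equality is impossible because `s` is coprime to `ω`, unless `s = 1`, where `p' = 0` and `p̂ = p ≥ 2`.
Hence `p̂ + q̂ = ω - 2κ s > s`, while `p̂ q' - q̂ p' = ε` is unchanged.
-/

/-- An *even rational parameter* is a fraction `p/q` with `p, q` coprime positive
integers, `p < q`, and `p*q` even. -/
def EvenParam (p q : ℕ) : Prop :=
  Nat.Coprime p q ∧ 0 < p ∧ p < q ∧ Even (p * q)

/-- `τ` is the *tune* of `p/q`: `0 < 2τ < p+q` and `2pτ ≡ ±1 (mod p+q)`. -/
def IsTune (p q τ : ℕ) : Prop :=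
  0 < 2 * τ ∧ 2 * τ < p + q ∧
    (((p : ℤ) + q) ∣ 2 * p * τ - 1 ∨ ((p : ℤ) + q) ∣ 2 * p * τ + 1)

/-- `p'/q'` is the *even predecessor* of `p/q`. -/
def IsEvenPred (p q p' q' : ℕ) : Prop :=
  Nat.Coprime p' q' ∧ p' < q' ∧ Even (p' * q') ∧
    ((p : ℤ) * q' - (q : ℤ) * p').natAbs = 1 ∧ p' + q' < p + q

/-- `κ` is the unique nonnegative integer with `κ/(2κ+1) ≤ τ/(p+q) < (κ+1)/(2κ+3)`. -/
def IsKappa (p q τ κ : ℕ) : Prop :=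
  κ * (p + q) ≤ (2 * κ + 1) * τ ∧ (2 * κ + 3) * τ < (κ + 1) * (p + q)

theorem Nat.Coprime.odd_add_of_even_mul {a b : ℕ} (hab : a.Coprime b) (he : Even (a * b)) :
    Odd (a + b) := by
  rcases Nat.even_or_odd a with ha | ha <;> rcases Nat.even_or_odd b with hb | hb
  · exact absurd hab (Nat.not_coprime_of_dvd_of_dvd one_lt_two ha.two_dvd hb.two_dvd)
  · exact ha.add_odd hb
  · exact ha.add_even hb
  · exact absurd he (Nat.not_even_iff_odd.mpr (ha.mul hb))

theorem Nat.Coprime.mul_lt_of_le {s n k : ℕ} (hsn : s.Coprime n) (hs : s ≠ 1) (hle : k * s ≤ n) :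
    k * s < n :=
  hle.lt_of_ne fun heq => hs (hsn.eq_one_of_dvd ⟨k, by rw [← heq, mul_comm]⟩)

theorem Int.eq_of_dvd_mul_sub_one_or_dvd_mul_add_one {n a t u : ℤ} (ht : 0 < t) (hu : 0 < u)
    (htn : 2 * t < n) (hun : 2 * u < n) (hat : n ∣ a * t - 1 ∨ n ∣ a * t + 1)
    (hau : n ∣ a * u - 1 ∨ n ∣ a * u + 1) : t = u := by
  have hcop : IsCoprime n a := by
    rcases hat with ⟨c, hc⟩ | ⟨c, hc⟩
    · exact ⟨-c, t, by linear_combination hc⟩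
    · exact ⟨c, -t, by linear_combination -hc⟩
  have hdvd : n ∣ a * (t - u) ∨ n ∣ a * (t + u) := by
    rcases hat with hat | hat <;> rcases hau with hau | hau
    · exact .inl (by simpa only [sub_sub_sub_cancel_right, ← mul_sub] using dvd_sub hat hau)
    · exact .inr (by simpa only [sub_add_add_cancel, ← mul_add] using dvd_add hat hau)
    · exact .inr (by simpa only [add_add_sub_cancel, ← mul_add] using dvd_add hat hau)
    · exact .inl (by simpa only [add_sub_add_right_eq_sub, ← mul_sub] using dvd_sub hat hau)
  rcases hdvd with hdvd | hdvd
  · have := Int.eq_zero_of_abs_lt_dvd (hcop.dvd_of_dvd_mul_left hdvd) (by rw [abs_lt]; omega)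
    omega
  · have := Int.eq_zero_of_abs_lt_dvd (hcop.dvd_of_dvd_mul_left hdvd) (by rw [abs_lt]; omega)
    omega

theorem IsTune.unique {p q τ τ' : ℕ} (hτ : IsTune p q τ) (hτ' : IsTune p q τ') : τ = τ' := by
  obtain ⟨hpos, hlt, hdvd⟩ := hτ
  obtain ⟨hpos', hlt', hdvd'⟩ := hτ'
  exact_mod_cast Int.eq_of_dvd_mul_sub_one_or_dvd_mul_add_one (n := p + q) (a := 2 * p)
    (t := τ) (u := τ') (by omega) (by omega) (by omega) (by omega) hdvd hdvd'

theorem IsTune.odd_add {p q τ : ℕ} (hτ : IsTune p q τ) : Odd (p + q) := by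
  rw [← Nat.not_even_iff_odd]
  rintro ⟨r, hr⟩
  have h2 : (2 : ℤ) ∣ (p : ℤ) + q := ⟨r, by omega⟩
  rcases hτ.2.2 with hd | hd <;> rw [mul_assoc] at hd <;> have := h2.trans hd <;> omega

theorem IsKappa.mul_le {p q τ κ s : ℕ} (hκ : IsKappa p q τ κ) (hω : 2 * τ + s = p + q) :
    (2 * κ + 1) * s ≤ p + q := by
  have := hκ.1
  rw [← hω] at this ⊢
  nlinarith

namespace IsEvenPred

variable {p q p' q' τ : ℕ}

theorem odd_add (h : IsEvenPred p q p' q') : Odd (p' + q') :=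
  h.1.odd_add_of_even_mul h.2.2.1

theorem det_eq_one_or_neg_one (h : IsEvenPred p q p' q') :
    (p : ℤ) * q' - q * p' = 1 ∨ (p : ℤ) * q' - q * p' = -1 := by
  simpa using Int.natAbs_eq_iff.mp h.2.2.2.1

theorem coprime_add (h : IsEvenPred p q p' q') : (p' + q').Coprime (p + q) := by
  rw [← Nat.isCoprime_iff_coprime]
  push_cast
  rcases h.det_eq_one_or_neg_one with hd | hd
  · exact ⟨p, -p', by linear_combination hd⟩
  · exact ⟨-p, p', by linear_combination -hd⟩

theorem isTune (h : IsEvenPred p q p' q') (hτ : 2 * τ + (p' + q') = p + q) : IsTune p q τ := by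
  have hs := h.odd_add.pos
  have hlt := h.2.2.2.2
  refine ⟨by omega, by omega, ?_⟩
  have hτ' : (2 * τ : ℤ) + (p' + q') = p + q := by exact_mod_cast hτ
  rcases h.det_eq_one_or_neg_one with hd | hd
  · exact .inr ⟨p - p', by linear_combination p * hτ' - hd⟩
  · exact .inl ⟨p - p', by linear_combination p * hτ' - hd⟩

theorem two_mul_tune_add (h : IsEvenPred p q p' q') (hτ : IsTune p q τ) :
    2 * τ + (p' + q') = p + q := by
  obtain ⟨τ₀, hτ₀⟩ : ∃ τ₀, 2 * τ₀ + (p' + q') = p + q := by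
    obtain ⟨r, hr⟩ := Nat.Odd.sub_odd hτ.odd_add h.odd_add
    exact ⟨r, by have := h.2.2.2.2; omega⟩
  rwa [hτ.unique (h.isTune hτ₀)]

end IsEvenPred

theorem evenPred_of_corePred_general (p q τ κ p' q' phat qhat : ℕ)
    (hp2 : 2 ≤ p)
    (hτ : IsTune p q τ) (hκ : IsKappa p q τ κ)
    (hpred : IsEvenPred p q p' q')
    (hphat : phat + 2 * κ * p' = p) (hqhat : qhat + 2 * κ * q' = q) :
    IsEvenPred phat qhat p' q' := by
  refine ⟨hpred.1, hpred.2.1, hpred.2.2.1, ?_, ?_⟩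
  · convert hpred.2.2.2.1 using 2
    push_cast [← hphat, ← hqhat]
    ring
  · have hle := hκ.mul_le (hpred.two_mul_tune_add hτ)
    rcases eq_or_ne (p' + q') 1 with hs | hs
    · have : p' = 0 := by have := hpred.2.1; omega
      subst this
      omega
    · have := hpred.coprime_add.mul_lt_of_le hs hle
      nlinarith

/-- the even predecessor of p/q is also the even predecessor of
the core predecessor of p/q. -/
theorem evenPred_of_corePred (p q τ κ p' q' phat qhat : ℕ)
    (h : EvenParam p q) (hp2 : 2 ≤ p)
    (hτ : IsTune p q τ) (hκ : IsKappa p q τ κ)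
    (hpred : IsEvenPred p q p' q')
    (hphat : phat + 2 * κ * p' = p) (hqhat : qhat + 2 * κ * q' = q) :
    IsEvenPred phat qhat p' q' :=
  evenPred_of_corePred_general p q τ κ p' q' phat qhat hp2 hτ hκ hpred hphat hqhat
end

section
/- Let A ∈ (0,1) be irrational. Then there exists a sequence {p_k/q_k} of fractions with p_0/q_0 = 0/1, with p_k/q_k ≺ p_{k+1}/q_{k+1} for all k, and with lim_{k→∞} p_k/q_k = A. -/
/-- The predecessor relation: `pstar/qstar ≺ p/q`. -/
def PredRel (pstar qstar p q : ℕ) : Prop :=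
  EvenParam p q ∧
    ((p = 1 ∧ pstar = 0 ∧ qstar = 1) ∨
      (2 ≤ p ∧ ∃ τ κ p' q', IsTune p q τ ∧ IsKappa p q τ κ ∧
        IsEvenPred p q p' q' ∧
        ((κ = 0 ∧ pstar = p' ∧ qstar = q') ∨
          (1 ≤ κ ∧ pstar + 2 * κ * p' = p ∧ qstar + 2 * κ * q' = q))))

/-!
Walk down the Farey tree towards `A`, keeping the current term `p/q` as the mediant of Farey
neighbours `e/f` (with `e + f` odd) and `g/h` (both odd) that bracket `A`. Since `pf - qe = ∓1`,
`e/f` is the even predecessor of `p/q`, the tune is `(g + h)/2`, and κ is read off by comparing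
`g + h` with `2(e + f)`. If `A` lies between `p/q` and `g/h`, or between `p/q` and
`(p + e)/(q + f)`, the next term is the mediant of `p/q` with that fraction: it has κ = 0 and even
predecessor `p/q`. Otherwise `A` is close to `e/f`, and the next term is `(p + 2κe)/(q + 2κf)` for
the `κ ≥ 1` with `A` between `e/f` and `(p + (2κ - 1)e)/(q + (2κ - 1)f)` but not between `e/f` and
`(p + (2κ + 1)e)/(q + (2κ + 1)f)`; its core predecessor is `p/q`. Irrationality keeps `A` off every
mediant. Denominators increase and `|p/q - A| < 1/q`, so the terms converge to `A`.
-/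

open Set Filter Topology

theorem exists_seq_of_forall_exists {α : Type*} {P : α → Prop} {R : α → α → Prop} {a : α}
    (ha : P a) (h : ∀ x, P x → ∃ y, P y ∧ R x y) :
    ∃ s : ℕ → α, s 0 = a ∧ ∀ n, P (s n) ∧ R (s n) (s (n + 1)) := by
  choose next hnext using h
  let s : ℕ → {x // P x} := fun n =>
    Nat.rec ⟨a, ha⟩ (fun _ x => ⟨next x.1 x.2, (hnext x.1 x.2).1⟩) n
  exact ⟨fun n => (s n).1, rfl, fun n => ⟨(s n).2, (hnext _ (s n).2).2⟩⟩

theorem Nat.Coprime.of_natAbs_mul_sub_mul_eq_one {a b c d : ℕ}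
    (h : ((a : ℤ) * d - b * c).natAbs = 1) : a.Coprime b := by
  rw [← Nat.isCoprime_iff_coprime]
  rcases Int.natAbs_eq_iff.mp h with h | h
  · exact ⟨d, -c, by linear_combination h⟩
  · exact ⟨-d, c, by linear_combination -h⟩

theorem Nat.even_mul_of_odd_add {m n : ℕ} (h : Odd (m + n)) : Even (m * n) := by
  rcases Nat.even_or_odd m with hm | hm
  · exact hm.mul_right n
  · exact ((Nat.odd_add.mp h).mp hm).mul_left m

section Interval

variable {α : Type*} [LinearOrder α] {a b m x : α}

theorem Set.mem_uIoo_left_or_right (hx : x ∈ uIoo a b) (hm : m ∈ uIoo a b) (hne : x ≠ m) :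
    x ∈ uIoo a m ∨ x ∈ uIoo m b := by
  simp only [uIoo_eq_union, mem_union, mem_Ioo] at *
  grind

theorem Set.abs_sub_lt_max_of_mem_uIoo [AddCommGroup α] [IsOrderedAddMonoid α]
    (hx : x ∈ uIoo a b) : |x - m| < max |a - m| |b - m| := by
  simp only [uIoo_eq_union, mem_union, mem_Ioo] at hx
  rw [lt_max_iff]
  grind [abs_sub_lt_iff, le_abs_self, neg_abs_le]

end Interval

theorem add_div_add_mem_uIoo {K : Type*} [Field K] [LinearOrder K] [IsStrictOrderedRing K]
    {a b c d : K} (hb : 0 < b) (hd : 0 < d) (hne : a / b ≠ c / d) :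
    (a + c) / (b + d) ∈ uIoo (a / b) (c / d) := by
  have hbd : 0 < b + d := add_pos hb hd
  rcases hne.lt_or_gt with h | h
  · rw [div_lt_div_iff₀ hb hd] at h
    exact mem_uIoo_of_lt (by rw [div_lt_div_iff₀ hb hbd]; linarith)
      (by rw [div_lt_div_iff₀ hbd hd]; linarith)
  · rw [div_lt_div_iff₀ hd hb] at h
    exact mem_uIoo_of_gt (by rw [div_lt_div_iff₀ hd hbd]; linarith)
      (by rw [div_lt_div_iff₀ hbd hb]; linarith)

theorem abs_div_sub_div_of_natAbs_eq_one {a b c d : ℕ} (hb : 0 < b) (hd : 0 < d)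
    (h : ((a : ℤ) * d - b * c).natAbs = 1) :
    |(a : ℝ) / b - c / d| = 1 / (b * d) := by
  have hnum : |(a : ℝ) * d - b * c| = 1 := by
    have := congrArg (Nat.cast : ℕ → ℝ) h
    rw [Nat.cast_natAbs, Nat.cast_one, Int.cast_abs] at this
    exact_mod_cast this
  rw [div_sub_div _ _ (by positivity) (by positivity), abs_div, hnum,
    abs_of_pos (by positivity)]

theorem tendsto_div_of_abs_sub_lt_one_div {p q : ℕ → ℕ} {A : ℝ} (hq : Tendsto q atTop atTop)
    (h : ∀ k, |(p k : ℝ) / q k - A| < 1 / q k) :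
    Tendsto (fun k => (p k : ℝ) / q k) atTop (𝓝 A) := by
  rw [tendsto_iff_norm_sub_tendsto_zero]
  exact squeeze_zero (fun _ => norm_nonneg _) (fun k => (h k).le)
    (tendsto_one_div_atTop_nhds_zero_nat.comp hq)

/-- Farey neighbours `e/f` and `g/h`; the term of the sequence they encode is their mediant
`num/den`, whose even predecessor is `e/f`. -/
structure FareyPair where
  e : ℕ
  f : ℕ
  g : ℕ
  h : ℕ

namespace FareyPair

variable (s : FareyPair) (A : ℝ)

def num : ℕ := s.e + s.g

def den : ℕ := s.f + s.h

noncomputable def left : ℝ := s.e / s.f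

noncomputable def right : ℝ := s.g / s.h

noncomputable def mediant : ℝ := s.num / s.den

@[simps]
def shift (n : ℕ) : FareyPair := ⟨s.e, s.f, s.g + 2 * n * s.e, s.h + 2 * n * s.f⟩

theorem shift_zero : s.shift 0 = s := by
  simp [shift]

theorem shift_shift (m n : ℕ) : (s.shift m).shift n = s.shift (m + n) := by
  simp only [shift, mk.injEq, true_and]
  constructor <;> ring

structure Admissible : Prop where
  det : ((s.e : ℤ) * s.h - s.f * s.g).natAbs = 1
  e_lt_f : s.e < s.f
  g_le_h : s.g ≤ s.h
  odd_e_add_f : Odd (s.e + s.f)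
  odd_g : Odd s.g
  odd_h : Odd s.h

/-- When `A` lies between `e/f` and `(g + 2e)/(h + 2f)`, the sequence continues by a core step,
and `core_step` is what gives that step `κ ≥ 1` and numerator at least `2`. -/
structure Brackets : Prop extends s.Admissible where
  mem_uIoo : A ∈ uIoo s.left s.right
  core_step : A ∈ uIoo s.left (s.shift 1).right → s.g + s.h < 2 * (s.e + s.f) ∧ 0 < s.e

variable {s A}

theorem Admissible.shift (hs : s.Admissible) (n : ℕ) : (s.shift n).Admissible where
  det := by
    convert hs.det using 2
    simp only [shift_e, shift_f, shift_g, shift_h]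
    push_cast
    ring
  e_lt_f := hs.e_lt_f
  g_le_h := add_le_add hs.g_le_h (Nat.mul_le_mul_left _ hs.e_lt_f.le)
  odd_e_add_f := hs.odd_e_add_f
  odd_g := by simpa only [shift_g, mul_assoc] using hs.odd_g.add_even (even_two_mul _)
  odd_h := by simpa only [shift_h, mul_assoc] using hs.odd_h.add_even (even_two_mul _)

theorem Admissible.abs_right_sub_left (hs : s.Admissible) :
    |s.right - s.left| = 1 / (s.h * s.f) := by
  refine abs_div_sub_div_of_natAbs_eq_one hs.odd_h.pos (by have := hs.e_lt_f; omega) ?_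
  rw [← Int.natAbs_neg]
  convert hs.det using 2
  ring

theorem Brackets.abs_mediant_sub_lt (hs : s.Brackets A) : |s.mediant - A| < 1 / s.den := by
  have hf : 0 < s.f := by have := hs.e_lt_f; omega
  have hden : 0 < s.den := Nat.add_pos_left hf _
  have hleft : |s.left - s.mediant| = 1 / (s.f * s.den) := by
    refine abs_div_sub_div_of_natAbs_eq_one hf hden ?_
    convert hs.det using 2
    simp only [num, den]
    push_cast
    ring
  have hright : |s.right - s.mediant| = 1 / (s.h * s.den) := by
    refine abs_div_sub_div_of_natAbs_eq_one hs.odd_h.pos hden ?_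
    rw [← Int.natAbs_neg]
    convert hs.det using 2
    simp only [num, den]
    push_cast
    ring
  have hle {k : ℕ} (hk : 0 < k) : (1 : ℝ) / (k * s.den) ≤ 1 / s.den :=
    one_div_le_one_div_of_le (by positivity)
      (le_mul_of_one_le_left (by positivity) (by exact_mod_cast hk))
  have key := abs_sub_lt_max_of_mem_uIoo (m := s.mediant) hs.mem_uIoo
  rw [abs_sub_comm, hleft, hright] at key
  exact key.trans_le (max_le (hle hf) (hle hs.odd_h.pos))

theorem mediant_mem_uIoo (hdet : ((s.e : ℤ) * s.h - s.f * s.g).natAbs = 1) (hf : 0 < s.f)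
    (hh : 0 < s.h) : s.mediant ∈ uIoo s.left s.right := by
  have hne : s.left ≠ s.right := by
    intro h
    have := abs_div_sub_div_of_natAbs_eq_one hf hh hdet
    rw [← left, ← right, h, sub_self, abs_zero] at this
    exact (one_div_pos.2 (by positivity : (0 : ℝ) < s.f * s.h)).ne this
  simpa only [mediant, left, right, num, den, Nat.cast_add] using
    add_div_add_mem_uIoo (by positivity : (0 : ℝ) < s.f) (by positivity) hne

theorem Admissible.odd_num_add_den (hs : s.Admissible) : Odd (s.num + s.den) := by
  have heven : Even (s.g + s.h) := hs.odd_g.add_odd hs.odd_h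
  rw [show s.num + s.den = s.e + s.f + (s.g + s.h) by simp only [num, den]; ring]
  exact hs.odd_e_add_f.add_even heven

/-- For `p/q = num/den` we have `p f - q e = ∓1`, so `e/f` is the even predecessor, the tune is
`(g + h)/2`, and `hκ`, `hκ'` are the κ-condition. -/
theorem Admissible.predRel (hs : s.Admissible) {κ p₀ q₀ : ℕ}
    (hκ : 2 * κ * (s.e + s.f) ≤ s.g + s.h) (hκ' : s.g + s.h < 2 * (κ + 1) * (s.e + s.f))
    (hp : 2 ≤ s.num)
    (hcase : κ = 0 ∧ p₀ = s.e ∧ q₀ = s.f ∨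
      1 ≤ κ ∧ p₀ + 2 * κ * s.e = s.num ∧ q₀ + 2 * κ * s.f = s.den) :
    PredRel p₀ q₀ s.num s.den := by
  have hef := hs.e_lt_f
  have hgh := hs.g_le_h
  have hg := hs.odd_g.pos
  obtain ⟨τ, hτ⟩ := hs.odd_g.add_odd hs.odd_h
  have hsum : s.num + s.den = s.e + s.f + 2 * τ := by simp only [num, den]; omega
  have hdet : ((s.num : ℤ) * s.f - s.den * s.e) = -((s.e : ℤ) * s.h - s.f * s.g) := by
    simp only [num, den]
    push_cast
    ring
  have hdet' : ((s.num : ℤ) * s.f - s.den * s.e).natAbs = 1 := by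
    rw [hdet, Int.natAbs_neg, hs.det]
  have htune : IsTune s.num s.den τ := by
    refine ⟨by omega, by omega, ?_⟩
    have hdiv : 2 * (s.num : ℤ) * τ - ((s.e : ℤ) * s.h - s.f * s.g) = s.g * (s.num + s.den) := by
      have : (s.g : ℤ) + s.h = 2 * τ := by exact_mod_cast (by omega : s.g + s.h = 2 * τ)
      simp only [num, den] at this ⊢
      push_cast
      linear_combination (-(s.e : ℤ) - s.g) * this
    rcases Int.natAbs_eq_iff.mp hs.det with h | h <;> rw [h] at hdiv
    · exact Or.inl ⟨s.g, by push_cast at hdiv ⊢; linear_combination hdiv⟩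
    · exact Or.inr ⟨s.g, by push_cast at hdiv ⊢; linear_combination hdiv⟩
  have hkappa : IsKappa s.num s.den τ κ := by
    rw [IsKappa, hsum]
    constructor <;> nlinarith
  refine ⟨⟨Nat.Coprime.of_natAbs_mul_sub_mul_eq_one hdet', by omega,
      by simp only [num, den]; omega, Nat.even_mul_of_odd_add hs.odd_num_add_den⟩,
    Or.inr ⟨hp, τ, κ, s.e, s.f, htune, hkappa, ?_, hcase⟩⟩
  exact ⟨Nat.Coprime.of_natAbs_mul_sub_mul_eq_one hs.det, hef,
    Nat.even_mul_of_odd_add hs.odd_e_add_f, hdet', by omega⟩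

theorem Admissible.exists_brackets_shift (hs : s.Admissible) (hA : A ∈ uIoo s.left s.right) :
    ∃ n, (s.shift n).Brackets A := by
  set P : ℕ → Prop := fun n => A ∈ uIoo s.left (s.shift n).right
  have hescape : ∃ n, ¬ P n := by
    have hpos : 0 < |A - s.left| :=
      abs_pos.2 (sub_ne_zero.2 fun h => left_notMem_uIoo (h ▸ hA))
    obtain ⟨n, hn⟩ := exists_nat_one_div_lt hpos
    refine ⟨n, fun hP => ?_⟩
    have hclose := abs_sub_lt_max_of_mem_uIoo (m := s.left) hP
    have hgap : |(s.shift n).right - s.left| = _ := (hs.shift n).abs_right_sub_left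
    rw [sub_self, abs_zero, max_eq_right (abs_nonneg _), hgap] at hclose
    have hsmall : 1 / (((s.shift n).h : ℝ) * (s.shift n).f) ≤ 1 / (n + 1) := by
      have hf : 1 ≤ s.f := by have := hs.e_lt_f; omega
      have hh := hs.odd_h.pos
      gcongr
      norm_cast
      simp only [shift_h, shift_f]
      calc n + 1 ≤ s.h + 2 * n * s.f := by nlinarith
        _ ≤ _ := Nat.le_mul_of_pos_right _ hf
    linarith
  -- the last `n` for which `A` is still caught; the premise of `core_step` for `s.shift n`
  -- is `P (n + 1)`
  obtain ⟨n, hn, hn1⟩ : ∃ n, P n ∧ ¬ P (n + 1) := by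
    by_contra! h
    obtain ⟨m, hm⟩ := hescape
    exact hm (Nat.rec (by simpa only [P, shift_zero] using hA) h m)
  exact ⟨n, ⟨hs.shift n, hn, fun h => (hn1 (by rwa [shift_shift] at h)).elim⟩⟩

variable {t : FareyPair}

theorem Admissible.brackets_and_predRel (ht : t.Admissible) (hA : A ∈ uIoo t.left t.right)
    (hgh : t.g + t.h < 2 * (t.e + t.f)) (he : 0 < t.e) :
    t.Brackets A ∧ PredRel t.e t.f t.num t.den := by
  refine ⟨⟨ht, hA, fun _ => ⟨hgh, he⟩⟩, ht.predRel (κ := 0) (by simp) (by simpa using hgh) ?_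
    (Or.inl ⟨rfl, rfl, rfl⟩)⟩
  have := ht.odd_g.pos
  simp only [num]
  omega

theorem Brackets.succ_right (hs : s.Brackets A) (hA : A ∈ uIoo s.mediant s.right) :
    FareyPair.Brackets ⟨s.num, s.den, s.g, s.h⟩ A ∧
      PredRel s.num s.den (s.num + s.g) (s.den + s.h) := by
  have := hs.odd_g.pos
  have := hs.e_lt_f
  have := hs.g_le_h
  refine Admissible.brackets_and_predRel ⟨?_, ?_, hs.g_le_h, hs.odd_num_add_den, hs.odd_g,
    hs.odd_h⟩ hA ?_ ?_ <;> simp only [num, den]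
  · convert hs.det using 2
    push_cast
    ring
  all_goals omega

theorem Brackets.succ_left (hs : s.Brackets A) (hA : A ∈ uIoo s.mediant (s.shift 1).right) :
    FareyPair.Brackets ⟨s.num, s.den, (s.shift 1).g, (s.shift 1).h⟩ A ∧
      PredRel s.num s.den (s.num + (s.shift 1).g) (s.den + (s.shift 1).h) := by
  have := hs.odd_g.pos
  have := hs.e_lt_f
  have := hs.g_le_h
  refine Admissible.brackets_and_predRel ⟨?_, ?_, (hs.shift 1).g_le_h, hs.odd_num_add_den,
    (hs.shift 1).odd_g, (hs.shift 1).odd_h⟩ hA ?_ ?_ <;> simp only [num, den, shift_g, shift_h]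
  · rw [← Int.natAbs_neg]
    convert hs.det using 2
    push_cast
    ring
  all_goals omega

theorem Brackets.succ_core (hs : s.Brackets A) (hA : A ∈ uIoo s.left (s.shift 1).right) :
    ∃ κ, 1 ≤ κ ∧ (s.shift κ).Brackets A ∧ PredRel s.num s.den (s.shift κ).num (s.shift κ).den := by
  obtain ⟨hgh, he⟩ := hs.core_step hA
  obtain ⟨n, hn⟩ := (hs.shift 1).exists_brackets_shift hA
  rw [shift_shift] at hn
  have := hs.odd_g.pos
  refine ⟨1 + n, by omega, hn, (hs.shift (1 + n)).predRel (κ := 1 + n) ?_ ?_ ?_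
    (Or.inr ⟨by omega, ?_, ?_⟩)⟩ <;> simp only [num, den, shift_e, shift_f, shift_g, shift_h]
  all_goals nlinarith

theorem Brackets.exists_succ (hs : s.Brackets A) (hirr : Irrational A) :
    ∃ t : FareyPair, t.Brackets A ∧ PredRel s.num s.den t.num t.den ∧ s.den < t.den := by
  have hne (p q : ℕ) : A ≠ p / q := by simpa using hirr.ne_rational p q
  have hf : 0 < s.f := by have := hs.e_lt_f; omega
  have hh := hs.odd_h.pos
  rcases mem_uIoo_left_or_right hs.mem_uIoo (mediant_mem_uIoo hs.det hf hh) (hne _ _)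
    with hA | hA
  · have hnext : (s.shift 1).right ∈ uIoo s.left s.mediant := by
      have hdet : ((s.e : ℤ) * s.den - s.f * s.num).natAbs = 1 := by
        convert hs.det using 2
        simp only [num, den]
        push_cast
        ring
      have hmed := mediant_mem_uIoo (s := ⟨s.e, s.f, s.num, s.den⟩) hdet hf
        (by simp only [den]; omega)
      have heq : (s.shift 1).right = mediant ⟨s.e, s.f, s.num, s.den⟩ := by
        simp only [right, mediant, num, den, shift_g, shift_h]
        push_cast
        ring_nf
      rwa [heq]
    rcases mem_uIoo_left_or_right hA hnext (hne _ _) with hA | hA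
    · obtain ⟨κ, hκ, ht, hpred⟩ := hs.succ_core hA
      refine ⟨_, ht, hpred, ?_⟩
      simp only [den, shift_f, shift_h]
      nlinarith
    · obtain ⟨ht, hpred⟩ := hs.succ_left (by rwa [uIoo_comm])
      exact ⟨_, ht, hpred, by simp only [den, shift_h]; omega⟩
  · obtain ⟨ht, hpred⟩ := hs.succ_right hA
    exact ⟨_, ht, hpred, by simp only [den]; omega⟩

end FareyPair

def IsTerm (A : ℝ) (x : ℕ × ℕ) : Prop :=
  x = (0, 1) ∨ ∃ s : FareyPair, s.Brackets A ∧ (s.num, s.den) = x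

namespace IsTerm

variable {A : ℝ} {x : ℕ × ℕ}

theorem abs_sub_lt (hA0 : 0 < A) (hA1 : A < 1) (hx : IsTerm A x) :
    |(x.1 : ℝ) / x.2 - A| < 1 / x.2 := by
  rcases hx with rfl | ⟨s, hs, rfl⟩
  · simpa [abs_of_pos hA0] using hA1
  · exact hs.abs_mediant_sub_lt

theorem exists_succ (hA0 : 0 < A) (hA1 : A < 1) (hirr : Irrational A) (hx : IsTerm A x) :
    ∃ y, IsTerm A y ∧ PredRel x.1 x.2 y.1 y.2 ∧ x.2 < y.2 := by
  rcases hx with rfl | ⟨s, hs, rfl⟩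
  · have hs₀ : FareyPair.Admissible ⟨0, 1, 1, 1⟩ :=
      ⟨rfl, one_pos, le_rfl, odd_one, odd_one, odd_one⟩
    obtain ⟨n, hn⟩ := hs₀.exists_brackets_shift
      (by simpa [FareyPair.left, FareyPair.right] using mem_uIoo_of_lt hA0 hA1)
    refine ⟨_, Or.inr ⟨_, hn, rfl⟩, ⟨⟨?_, ?_, ?_, ?_⟩, Or.inl ⟨?_, rfl, rfl⟩⟩, ?_⟩ <;>
      simp [FareyPair.num, FareyPair.den]
    exact ⟨n + 1, by ring⟩
  · obtain ⟨t, ht, hpred, hden⟩ := hs.exists_succ hirr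
    exact ⟨_, Or.inr ⟨t, ht, rfl⟩, hpred, hden⟩

end IsTerm

/-- existence of the predecessor sequence converging to an
irrational A ∈ (0,1), starting at 0/1. -/
theorem exists_predecessor_sequence (A : ℝ) (hA0 : 0 < A) (hA1 : A < 1)
    (hirr : Irrational A) :
    ∃ p q : ℕ → ℕ, p 0 = 0 ∧ q 0 = 1 ∧
      (∀ k, PredRel (p k) (q k) (p (k + 1)) (q (k + 1))) ∧
      Filter.Tendsto (fun k => (p k : ℝ) / (q k : ℝ)) Filter.atTop (nhds A) := by
  obtain ⟨x, hx0, hx⟩ := exists_seq_of_forall_exists (P := IsTerm A) (Or.inl rfl)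
    fun y hy => hy.exists_succ hA0 hA1 hirr
  have hq : StrictMono fun k => (x k).2 := strictMono_nat_of_lt_succ fun k => (hx k).2.2
  refine ⟨fun k => (x k).1, fun k => (x k).2, by simp [hx0], by simp [hx0],
    fun k => (hx k).2.1, ?_⟩
  exact tendsto_div_of_abs_sub_lt_one_div hq.tendsto_atTop fun k => (hx k).1.abs_sub_lt hA0 hA1
end
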